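/- arXiv:1210.2694 — 2 statements merged into one kernel-verified Lean document; each statement's English description precedes it below -/
import Mathlib

section
/- (Proposition 3.7(2), odd case) Let n ≥ 1. With 𝒩, 𝒟, 𝒥 as below and 𝒰 = 𝒥·𝒟·𝒩⁻¹·𝒟, the matrix 𝒥·𝒰·𝒥 admits an LU-decomposition: there exist a lower-triangular matrix L and an upper-triangular matrix U with 𝒥·𝒰·𝒥 = L·U. -/
open Matrix

open Finset

/-- Hockey stick. -/
lemma hockey (i : ℕ) : ∀ M : ℕ, ∑ k ∈ Finset.range M, k.choose i = M.choose (i+1) := by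
  intro M
  induction M with
  | zero => simp
  | succ M ih =>
      rw [Finset.sum_range_succ, ih, Nat.choose_succ_succ]
      simp [Nat.succ_eq_add_one]
      omega

/-- Key identity A: ∑_{k<M} C(k,i)·C(M-1-k,j) = C(M, i+j+1). -/
lemma keyA (i : ℕ) : ∀ (M j : ℕ),
    ∑ k ∈ Finset.range M, k.choose i * (M - 1 - k).choose j = M.choose (i+j+1) := by
  intro M
  induction M with
  | zero => intro j; simp
  | succ M ih =>
      intro j
      cases j with
      | zero =>
          have h : ∀ k ∈ Finset.range (M+1), k.choose i * (M + 1 - 1 - k).choose 0 = k.choose i := by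
            intro k _; simp
          rw [Finset.sum_congr rfl h, hockey]
      | succ j' =>
          rw [Finset.sum_range_succ]
          have hlast : (M + 1 - 1 - M).choose (j'+1) = 0 := by
            have : M + 1 - 1 - M = 0 := by omega
            rw [this]; simp
          rw [hlast, Nat.mul_zero, add_zero]
          have h : ∀ k ∈ Finset.range M,
              k.choose i * (M + 1 - 1 - k).choose (j'+1)
                = k.choose i * (M - 1 - k).choose j' + k.choose i * (M - 1 - k).choose (j'+1) := by
            intro k hk
            rw [Finset.mem_range] at hk
            have h1 : M + 1 - 1 - k = (M - 1 - k) + 1 := by omega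
            rw [h1, Nat.choose_succ_succ, Nat.mul_add]
          rw [Finset.sum_congr rfl h, Finset.sum_add_distrib, ih j', ih (j'+1)]
          have : i + (j'+1) + 1 = (i + j' + 1) + 1 := by omega
          rw [this, Nat.choose_succ_succ]

/-- Key identity E: for `t ≤ T`,
`C(T-t, j) = ∑_{i≤j} (-1)^i C(T-i, j-i) C(t,i)` (in `ℝ`). -/
lemma keyE : ∀ (t : ℕ), ∀ (j T : ℕ), t ≤ T →
    (((T - t).choose j : ℕ) : ℝ) =
      ∑ i ∈ Finset.range (j+1), (-1:ℝ)^i * (((T - i).choose (j - i) : ℕ) : ℝ)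
        * ((t.choose i : ℕ) : ℝ) := by
  intro t
  induction t with
  | zero =>
      intro j T _
      rw [Finset.sum_eq_single 0]
      · simp
      · intro b hb hb0
        have hb' : Nat.choose 0 b = 0 := Nat.choose_eq_zero_of_lt (by omega)
        rw [hb']; simp
      · intro h0; exact absurd (Finset.mem_range.mpr (by omega)) h0
  | succ t ih =>
      intro j T hT
      cases j with
      | zero => simp
      | succ j' =>
          have htT : t ≤ T := by omega
          have htT1 : t ≤ T - 1 := by omega
          rw [Finset.sum_range_succ' (fun i => (-1:ℝ)^i * (((T - i).choose (j'+1 - i) : ℕ) : ℝ)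
            * (((t+1).choose i : ℕ) : ℝ)) (j'+1)]
          have hterm : ∀ i ∈ Finset.range (j'+1),
              (-1:ℝ)^(i+1) * (((T - (i+1)).choose (j'+1 - (i+1)) : ℕ) : ℝ)
                * (((t+1).choose (i+1) : ℕ) : ℝ)
              = (-(1:ℝ)) * ((-1:ℝ)^i * (((T - 1 - i).choose (j' - i) : ℕ) : ℝ)
                  * ((t.choose i : ℕ) : ℝ))
                + (-1:ℝ)^(i+1) * (((T - 1 - i).choose (j' - i) : ℕ) : ℝ)
                    * ((t.choose (i+1) : ℕ) : ℝ) := by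
            intro i _
            have h1 : T - (i+1) = T - 1 - i := by omega
            have h2 : j' + 1 - (i+1) = j' - i := by omega
            have h3 : ((t+1).choose (i+1) : ℝ) = (t.choose i : ℝ) + (t.choose (i+1) : ℝ) := by
              rw [Nat.choose_succ_succ]; push_cast; ring
            rw [h1, h2, h3]
            ring
          rw [Finset.sum_congr rfl hterm, Finset.sum_add_distrib]
          rw [← Finset.mul_sum, ← ih j' (T-1) htT1]
          -- now the remaining sum plus the i = 0 term equals  C(T - t, j'+1)
          have hsum2 : (∑ i ∈ Finset.range (j'+1),
                (-1:ℝ)^(i+1) * (((T - 1 - i).choose (j' - i) : ℕ) : ℝ)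
                  * ((t.choose (i+1) : ℕ) : ℝ))
              + (-1:ℝ)^0 * (((T - 0).choose (j'+1 - 0) : ℕ) : ℝ) * (((t+1).choose 0 : ℕ) : ℝ)
              = ((( T - t).choose (j'+1) : ℕ) : ℝ) := by
            rw [ih (j'+1) T htT]
            rw [Finset.sum_range_succ' (fun i => (-1:ℝ)^i * (((T - i).choose (j'+1 - i) : ℕ) : ℝ)
              * ((t.choose i : ℕ) : ℝ)) (j'+1)]
            congr 1
            · apply Finset.sum_congr rfl
              intro i _
              have h1 : T - (i+1) = T - 1 - i := by omega
              have h2 : j' + 1 - (i+1) = j' - i := by omega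
              rw [h1, h2]
            · simp
          rw [add_assoc, hsum2]
          -- Pascal to finish
          have hTt : T - (t+1) + 1 = T - t := by omega
          have hTt2 : T - 1 - t = T - (t+1) := by omega
          have hp : ((T - t).choose (j'+1) : ℝ)
              = ((T - (t+1)).choose j' : ℝ) + ((T - (t+1)).choose (j'+1) : ℝ) := by
            rw [← hTt, Nat.choose_succ_succ]; push_cast; ring
          rw [hp, hTt2]
          ring

/-- helper: extend a truncated sum by zero padding -/
lemma sum_pad (m q : ℕ) (hq : q < m) (f : ℕ → ℝ) :
    ∑ i ∈ Finset.range (q+1), f i = ∑ i ∈ Finset.range m, if i ≤ q then f i else 0 := by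
  rw [Finset.sum_congr rfl (fun i hi => ?_), Finset.sum_subset (Finset.range_subset_range.mpr (by omega : q + 1 ≤ m)) (fun x _ hx => ?_)]
  · rw [if_neg (by rw [Finset.mem_range] at hx; omega)]
  · rw [Finset.mem_range] at hi
    rw [if_pos (by omega)]

/-- The leading blocks of the Hankel matrix `C(2n, i+j+1)` are nonsingular. -/
lemma Gblock_det (n k : ℕ) (hk : k ≤ n) (hn : 1 ≤ n) :
    (Matrix.of fun i j : Fin k =>
      (((2*n).choose ((i:ℕ)+(j:ℕ)+1) : ℕ) : ℝ)).det ≠ 0 := by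
  intro hdet
  obtain ⟨v, hv0, hv⟩ := Matrix.exists_mulVec_eq_zero_iff.mpr hdet
  apply hv0
  -- P t = ∑ j v j C(t, j)
  set P : ℕ → ℝ := fun t => ∑ j : Fin k, v j * ((t.choose (j:ℕ) : ℕ) : ℝ) with hP
  -- row equations
  have hrow : ∀ i : Fin k, ∑ j : Fin k, (((2*n).choose ((i:ℕ)+(j:ℕ)+1) : ℕ) : ℝ) * v j = 0 := by
    intro i
    have := congrFun hv i
    simpa [Matrix.mulVec, dotProduct] using this
  -- Step 1
  have step1 : ∀ i : ℕ, i < k →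
      ∑ t ∈ Finset.range (2*n), ((t.choose i : ℕ) : ℝ) * P (2*n - 1 - t) = 0 := by
    intro i hi
    have : ∑ t ∈ Finset.range (2*n), ((t.choose i : ℕ) : ℝ) * P (2*n - 1 - t)
        = ∑ j : Fin k, (((2*n).choose (i+(j:ℕ)+1) : ℕ) : ℝ) * v j := by
      have hexp : ∀ t ∈ Finset.range (2*n), ((t.choose i : ℕ) : ℝ) * P (2*n - 1 - t)
          = ∑ j : Fin k, ((t.choose i : ℕ) : ℝ) * (v j * (((2*n - 1 - t).choose (j:ℕ) : ℕ) : ℝ)) := by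
        intro t _
        rw [hP]
        simp only []
        rw [Finset.mul_sum]
      rw [Finset.sum_congr rfl hexp, Finset.sum_comm]
      apply Finset.sum_congr rfl
      intro j _
      have hkA : ((∑ t ∈ Finset.range (2*n), t.choose i * (2*n - 1 - t).choose (j:ℕ) : ℕ) : ℝ)
          = (((2*n).choose (i+(j:ℕ)+1) : ℕ) : ℝ) := by
        rw [keyA i (2*n) (j:ℕ)]
      push_cast at hkA
      calc ∑ t ∈ Finset.range (2*n), ((t.choose i : ℕ) : ℝ) * (v j * (((2*n - 1 - t).choose (j:ℕ) : ℕ) : ℝ))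
          = (∑ t ∈ Finset.range (2*n), ((t.choose i : ℕ) : ℝ) * (((2*n - 1 - t).choose (j:ℕ) : ℕ) : ℝ)) * v j := by
            rw [Finset.sum_mul]; apply Finset.sum_congr rfl; intro t _; ring
        _ = (((2*n).choose (i+(j:ℕ)+1) : ℕ) : ℝ) * v j := by rw [hkA]
    rw [this]
    have hrw : ∀ j : Fin k, (((2*n).choose (i+(j:ℕ)+1) : ℕ) : ℝ) * v j
        = (((2*n).choose ((⟨i, hi⟩ : Fin k) + (j:ℕ)+1) : ℕ) : ℝ) * v j := by intro j; rfl
    rw [Finset.sum_congr rfl (fun j _ => hrw j)]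
    exact hrow ⟨i, hi⟩
  -- the Newton coefficients
  set c : ℕ → ℝ := fun i => (-1:ℝ)^i *
    ∑ j : Fin k, (if i ≤ (j:ℕ) then v j * (((2*n - 1 - i).choose ((j:ℕ) - i) : ℕ) : ℝ) else 0) with hc
  -- Step 2
  have step2 : ∀ t, t < 2*n → P (2*n - 1 - t) = ∑ i ∈ Finset.range k, c i * ((t.choose i : ℕ) : ℝ) := by
    intro t ht
    have htT : t ≤ 2*n - 1 := by omega
    calc P (2*n - 1 - t) = ∑ j : Fin k, v j * (((2*n - 1 - t).choose (j:ℕ) : ℕ) : ℝ) := rfl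
      _ = ∑ j : Fin k, v j * ∑ i ∈ Finset.range k,
            (if i ≤ (j:ℕ) then (-1:ℝ)^i * (((2*n - 1 - i).choose ((j:ℕ) - i) : ℕ) : ℝ)
              * ((t.choose i : ℕ) : ℝ) else 0) := by
          apply Finset.sum_congr rfl
          intro j _
          rw [keyE t (j:ℕ) (2*n-1) htT, sum_pad k (j:ℕ) j.isLt _]
      _ = ∑ j : Fin k, ∑ i ∈ Finset.range k,
            v j * (if i ≤ (j:ℕ) then (-1:ℝ)^i * (((2*n - 1 - i).choose ((j:ℕ) - i) : ℕ) : ℝ)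
              * ((t.choose i : ℕ) : ℝ) else 0) := by
          apply Finset.sum_congr rfl
          intro j _
          rw [Finset.mul_sum]
      _ = ∑ i ∈ Finset.range k, c i * ((t.choose i : ℕ) : ℝ) := by
          rw [Finset.sum_comm]
          apply Finset.sum_congr rfl
          intro i _
          rw [hc]
          simp only []
          rw [Finset.mul_sum, Finset.sum_mul]
          apply Finset.sum_congr rfl
          intro j _
          by_cases hij : i ≤ (j:ℕ)
          · rw [if_pos hij, if_pos hij]; ring
          · rw [if_neg hij, if_neg hij]; ring
  -- Step 3: sum of squares vanishes
  have step3 : ∑ t ∈ Finset.range (2*n), (P (2*n - 1 - t))^2 = 0 := by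
    calc ∑ t ∈ Finset.range (2*n), (P (2*n - 1 - t))^2
        = ∑ t ∈ Finset.range (2*n), (∑ i ∈ Finset.range k, c i * ((t.choose i : ℕ) : ℝ)) * P (2*n - 1 - t) := by
          apply Finset.sum_congr rfl
          intro t ht
          rw [Finset.mem_range] at ht
          rw [← step2 t ht]; ring
      _ = ∑ t ∈ Finset.range (2*n), ∑ i ∈ Finset.range k,
            c i * (((t.choose i : ℕ) : ℝ) * P (2*n - 1 - t)) := by
          apply Finset.sum_congr rfl
          intro t _
          rw [Finset.sum_mul]
          apply Finset.sum_congr rfl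
          intro i _
          ring
      _ = ∑ i ∈ Finset.range k, c i * (∑ t ∈ Finset.range (2*n), ((t.choose i : ℕ) : ℝ) * P (2*n - 1 - t)) := by
          rw [Finset.sum_comm]
          apply Finset.sum_congr rfl
          intro i _
          rw [Finset.mul_sum]
      _ = 0 := by
          apply Finset.sum_eq_zero
          intro i hi
          rw [Finset.mem_range] at hi
          rw [step1 i hi, mul_zero]
  -- Step 4/5: P vanishes below 2n
  have step5 : ∀ u, u < 2*n → P u = 0 := by
    intro u hu
    have h4 := (Finset.sum_eq_zero_iff_of_nonneg (fun t _ => sq_nonneg (P (2*n - 1 - t)))).mp step3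
    have ht : 2*n - 1 - u ∈ Finset.range (2*n) := Finset.mem_range.mpr (by omega)
    have := h4 _ ht
    have hru : 2*n - 1 - (2*n - 1 - u) = u := by omega
    rw [hru] at this
    exact pow_eq_zero_iff (by norm_num) |>.mp this
  -- Step 6: triangular system
  have hall : ∀ m : ℕ, ∀ j : Fin k, (j:ℕ) = m → v j = 0 := by
    intro m
    induction m using Nat.strong_induction_on with
    | _ m ih =>
      intro j hj
      subst hj
      have hPj : P (j:ℕ) = 0 := step5 _ (by have := j.isLt; omega)
      rw [hP] at hPj
      simp only [] at hPj
      rw [Finset.sum_eq_single j] at hPj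
      · simpa using hPj
      · intro b _ hbj
        have hne : (b:ℕ) ≠ (j:ℕ) := fun h => hbj (Fin.ext h)
        rcases lt_or_gt_of_ne hne with hlt | hgt
        · rw [ih (b:ℕ) hlt b rfl, zero_mul]
        · rw [Nat.choose_eq_zero_of_lt hgt]; simp
      · intro hj'; exact absurd (Finset.mem_univ j) hj'
  funext j
  exact hall (j:ℕ) j rfl

set_option maxRecDepth 10000 in
/-- If every leading principal minor is nonzero, an LU decomposition exists. -/
lemma lu_rec : ∀ (p : ℕ) (A : Matrix (Fin p) (Fin p) ℝ),
    (∀ (k : ℕ) (h : k ≤ p), (A.submatrix (Fin.castLE h) (Fin.castLE h)).det ≠ 0) →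
    ∃ L U : Matrix (Fin p) (Fin p) ℝ,
      (∀ i j, i < j → L i j = 0) ∧ (∀ i j, j < i → U i j = 0) ∧ A = L * U := by
  intro p
  induction p with
  | zero =>
      intro A _
      exact ⟨1, 1, fun i => i.elim0, fun i => i.elim0, by ext i; exact i.elim0⟩
  | succ p ih =>
      intro A hA
      set B : Matrix (Fin p) (Fin p) ℝ := A.submatrix Fin.castSucc Fin.castSucc with hBdef
      have hcast : ∀ (k : ℕ) (h : k ≤ p),
          (Fin.castSucc ∘ Fin.castLE h) = Fin.castLE (by omega : k ≤ p + 1) := by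
        intro k h; funext x; apply Fin.ext; rfl
      have hB : ∀ (k : ℕ) (h : k ≤ p), (B.submatrix (Fin.castLE h) (Fin.castLE h)).det ≠ 0 := by
        intro k h
        rw [hBdef, Matrix.submatrix_submatrix, hcast k h]
        exact hA k (by omega)
      obtain ⟨L₀, U₀, hL₀, hU₀, hfac⟩ := ih B hB
      have hdetB : B.det ≠ 0 := by
        have h1 : (Fin.castSucc : Fin p → Fin (p+1)) = Fin.castLE (by omega : p ≤ p + 1) := by
          funext x; apply Fin.ext; rfl
        rw [hBdef, h1]
        exact hA p (by omega)
      have hdetLU : L₀.det * U₀.det ≠ 0 := by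
        rw [← Matrix.det_mul, ← hfac]; exact hdetB
      have hdetL₀ : IsUnit L₀.det := isUnit_iff_ne_zero.mpr (fun h => hdetLU (by rw [h, zero_mul]))
      have hdetU₀ : IsUnit U₀.det := isUnit_iff_ne_zero.mpr (fun h => hdetLU (by rw [h, mul_zero]))
      set r : Fin p → ℝ := fun k => A (Fin.last p) (Fin.castSucc k) with hr
      set cc : Fin p → ℝ := fun k => A (Fin.castSucc k) (Fin.last p) with hcc
      set w : Fin p → ℝ := Matrix.vecMul r (U₀⁻¹) with hw
      set vv : Fin p → ℝ := Matrix.mulVec (L₀⁻¹) cc with hvv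
      set s : ℝ := A (Fin.last p) (Fin.last p) - dotProduct w vv with hs
      set L : Matrix (Fin (p+1)) (Fin (p+1)) ℝ := Matrix.of fun i j =>
        if hi : (i:ℕ) < p then (if hj : (j:ℕ) < p then L₀ ⟨i, hi⟩ ⟨j, hj⟩ else 0)
        else (if hj : (j:ℕ) < p then w ⟨j, hj⟩ else 1) with hL
      set U : Matrix (Fin (p+1)) (Fin (p+1)) ℝ := Matrix.of fun i j =>
        if hi : (i:ℕ) < p then (if hj : (j:ℕ) < p then U₀ ⟨i, hi⟩ ⟨j, hj⟩ else vv ⟨i, hi⟩)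
        else (if hj : (j:ℕ) < p then 0 else s) with hU
      refine ⟨L, U, ?_, ?_, ?_⟩
      · -- L lower triangular
        intro i j hij
        have hij' : (i:ℕ) < (j:ℕ) := hij
        rw [hL]
        simp only [Matrix.of_apply]
        by_cases hi : (i:ℕ) < p
        · rw [dif_pos hi]
          by_cases hj : (j:ℕ) < p
          · rw [dif_pos hj]
            exact hL₀ _ _ (Fin.mk_lt_mk.mpr hij')
          · rw [dif_neg hj]
        · exfalso
          have := j.isLt
          omega
      · -- U upper triangular
        intro i j hji
        have hji' : (j:ℕ) < (i:ℕ) := hji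
        rw [hU]
        simp only [Matrix.of_apply]
        by_cases hi : (i:ℕ) < p
        · rw [dif_pos hi]
          by_cases hj : (j:ℕ) < p
          · rw [dif_pos hj]
            exact hU₀ _ _ (Fin.mk_lt_mk.mpr hji')
          · exfalso; omega
        · rw [dif_neg hi]
          have hj : (j:ℕ) < p := by have := i.isLt; omega
          rw [dif_pos hj]
      · -- A = L * U
        ext i j
        rw [Matrix.mul_apply, Fin.sum_univ_castSucc]
        have hLcast : ∀ (k : Fin p), L i k.castSucc
            = if hi : (i:ℕ) < p then L₀ ⟨i, hi⟩ k else w k := by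
          intro k
          rw [hL]
          simp only [Matrix.of_apply, Fin.coe_castSucc, Fin.eta, dif_pos k.isLt]
        have hUcast : ∀ (k : Fin p), U k.castSucc j
            = if hj : (j:ℕ) < p then U₀ k ⟨j, hj⟩ else vv k := by
          intro k
          rw [hU]
          simp only [Matrix.of_apply, Fin.coe_castSucc, Fin.eta, dif_pos k.isLt]
        have hlastnot : ¬ ((Fin.last p : Fin (p+1)) : ℕ) < p := by
          simp [Fin.val_last]
        have hLlast : L i (Fin.last p) = if (i:ℕ) < p then 0 else 1 := by
          rw [hL]; simp only [Matrix.of_apply, dif_neg hlastnot]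
          by_cases hi : (i:ℕ) < p
          · rw [dif_pos hi, if_pos hi]
          · rw [dif_neg hi, if_neg hi]
        have hUlast : U (Fin.last p) j = if hj : (j:ℕ) < p then 0 else s := by
          rw [hU]; simp only [Matrix.of_apply, dif_neg hlastnot]
        by_cases hi : (i:ℕ) < p <;> by_cases hj : (j:ℕ) < p
        · -- interior
          have hterm : ∀ k ∈ Finset.univ, L i k.castSucc * U k.castSucc j
              = L₀ ⟨i, hi⟩ k * U₀ k ⟨j, hj⟩ := by
            intro k _; rw [hLcast k, hUcast k, dif_pos hi, dif_pos hj]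
          rw [Finset.sum_congr rfl hterm, hLlast, hUlast, if_pos hi, dif_pos hj,
            zero_mul, add_zero]
          have hmm : ∑ k : Fin p, L₀ ⟨i, hi⟩ k * U₀ k ⟨j, hj⟩ = (L₀ * U₀) ⟨i, hi⟩ ⟨j, hj⟩ :=
            (Matrix.mul_apply).symm
          rw [hmm, ← hfac, hBdef]
          have hii : Fin.castSucc (⟨(i:ℕ), hi⟩ : Fin p) = i := Fin.ext rfl
          have hjj : Fin.castSucc (⟨(j:ℕ), hj⟩ : Fin p) = j := Fin.ext rfl
          rw [Matrix.submatrix_apply, hii, hjj]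
        · -- right column
          have hterm : ∀ k ∈ Finset.univ, L i k.castSucc * U k.castSucc j
              = L₀ ⟨i, hi⟩ k * vv k := by
            intro k _; rw [hLcast k, hUcast k, dif_pos hi, dif_neg hj]
          rw [Finset.sum_congr rfl hterm, hLlast, hUlast, if_pos hi, dif_neg hj,
            zero_mul, add_zero]
          have h1 : ∑ k : Fin p, L₀ ⟨(i:ℕ), hi⟩ k * vv k
              = Matrix.mulVec L₀ vv ⟨(i:ℕ), hi⟩ := rfl
          rw [h1, hvv, Matrix.mulVec_mulVec, Matrix.mul_nonsing_inv _ hdetL₀, Matrix.one_mulVec]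
          have hjlast : j = Fin.last p := Fin.ext (by have := j.isLt; rw [Fin.val_last]; omega)
          rw [hcc]
          have hii : Fin.castSucc (⟨(i:ℕ), hi⟩ : Fin p) = i := Fin.ext rfl
          show A i j = A (Fin.castSucc ⟨(i:ℕ), hi⟩) (Fin.last p)
          rw [hii, ← hjlast]
        · -- bottom row
          have hterm : ∀ k ∈ Finset.univ, L i k.castSucc * U k.castSucc j
              = w k * U₀ k ⟨j, hj⟩ := by
            intro k _; rw [hLcast k, hUcast k, dif_neg hi, dif_pos hj]
          rw [Finset.sum_congr rfl hterm, hLlast, hUlast, if_neg hi, dif_pos hj,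
            one_mul, add_zero]
          have h1 : ∑ k : Fin p, w k * U₀ k ⟨(j:ℕ), hj⟩
              = Matrix.vecMul w U₀ ⟨(j:ℕ), hj⟩ := rfl
          rw [h1, hw, Matrix.vecMul_vecMul, Matrix.nonsing_inv_mul _ hdetU₀, Matrix.vecMul_one]
          have hilast : i = Fin.last p := Fin.ext (by have := i.isLt; rw [Fin.val_last]; omega)
          rw [hr]
          have hjj : Fin.castSucc (⟨(j:ℕ), hj⟩ : Fin p) = j := Fin.ext rfl
          show A i j = A (Fin.last p) (Fin.castSucc ⟨(j:ℕ), hj⟩)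
          rw [hjj, ← hilast]
        · -- corner
          have hterm : ∀ k ∈ Finset.univ, L i k.castSucc * U k.castSucc j
              = w k * vv k := by
            intro k _; rw [hLcast k, hUcast k, dif_neg hi, dif_neg hj]
          rw [Finset.sum_congr rfl hterm, hLlast, hUlast, if_neg hi, dif_neg hj, one_mul]
          have h1 : ∑ k : Fin p, w k * vv k = dotProduct w vv := rfl
          rw [h1, hs]
          have hilast : i = Fin.last p := Fin.ext (by have := i.isLt; rw [Fin.val_last]; omega)
          have hjlast : j = Fin.last p := Fin.ext (by have := j.isLt; rw [Fin.val_last]; omega)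
          rw [hilast, hjlast]
          ring

noncomputable section

/-- `𝒩`: the `n × n` real matrix with entries `𝒩_{i,j} = C(2n, n+i−j)`
(here `n + i − j ≥ 1 > 0` always, so the `ℓ < 0` convention is not needed);
its determinant is positive, so `𝒩` is invertible. -/
def Nmat (n : ℕ) : Matrix (Fin n) (Fin n) ℝ :=
  Matrix.of fun i j => ((2 * n).choose (n + (i : ℕ) - (j : ℕ)) : ℝ)

/-- `𝒟`: the `n × n` lower-triangular matrix with `𝒟_{i,j} = C(2n, i−j)` for
`i ≥ j` and `0` otherwise. -/
def Dmat (n : ℕ) : Matrix (Fin n) (Fin n) ℝ :=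
  Matrix.of fun i j =>
    if (j : ℕ) ≤ (i : ℕ) then ((2 * n).choose ((i : ℕ) - (j : ℕ)) : ℝ) else 0

/-- `𝒥`: the `n × n` exchange matrix, `𝒥_{i,j} = 1` if `i + j = n − 1` and `0`
otherwise. -/
def Jmat (n : ℕ) : Matrix (Fin n) (Fin n) ℝ :=
  Matrix.of fun i j => if (i : ℕ) + (j : ℕ) = n - 1 then 1 else 0

/-- `𝒰 = 𝒥·𝒟·𝒩⁻¹·𝒟`. -/
def Umat (n : ℕ) : Matrix (Fin n) (Fin n) ℝ :=
  Jmat n * Dmat n * (Nmat n)⁻¹ * Dmat n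

/-- product of lower-triangular matrices is lower triangular -/
lemma lowmul {n : ℕ} {A B : Matrix (Fin n) (Fin n) ℝ}
    (hA : ∀ i j, i < j → A i j = 0) (hB : ∀ i j, i < j → B i j = 0) :
    ∀ i j, i < j → (A * B) i j = 0 := by
  intro i j hij
  rw [Matrix.mul_apply]
  apply Finset.sum_eq_zero
  intro k _
  by_cases hk : i < k
  · rw [hA i k hk, zero_mul]
  · have : k < j := lt_of_le_of_lt (not_lt.mp hk) hij
    rw [hB k j this, mul_zero]

lemma Jmul {n : ℕ} (hn : 1 ≤ n) (X : Matrix (Fin n) (Fin n) ℝ) (i j : Fin n) :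
    (Jmat n * X) i j = X ⟨n - 1 - (i:ℕ), by omega⟩ j := by
  rw [Matrix.mul_apply]
  rw [Finset.sum_eq_single (⟨n - 1 - (i:ℕ), by omega⟩ : Fin n)]
  · rw [Jmat]
    simp only [Matrix.of_apply]
    rw [if_pos (show (i:ℕ) + (n - 1 - (i:ℕ)) = n - 1 by have := i.isLt; omega), one_mul]
  · intro b _ hb
    rw [Jmat]
    simp only [Matrix.of_apply]
    rw [if_neg, zero_mul]
    intro hc
    apply hb
    apply Fin.ext
    show (b:ℕ) = n - 1 - (i:ℕ)
    have := i.isLt; have := b.isLt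
    omega
  · intro h; exact absurd (Finset.mem_univ _) h

lemma mulJ {n : ℕ} (hn : 1 ≤ n) (X : Matrix (Fin n) (Fin n) ℝ) (i j : Fin n) :
    (X * Jmat n) i j = X i ⟨n - 1 - (j:ℕ), by omega⟩ := by
  rw [Matrix.mul_apply]
  rw [Finset.sum_eq_single (⟨n - 1 - (j:ℕ), by omega⟩ : Fin n)]
  · rw [Jmat]
    simp only [Matrix.of_apply]
    rw [if_pos (show (n - 1 - (j:ℕ)) + (j:ℕ) = n - 1 by have := j.isLt; omega), mul_one]
  · intro b _ hb
    rw [Jmat]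
    simp only [Matrix.of_apply]
    rw [if_neg, mul_zero]
    intro hc
    apply hb
    apply Fin.ext
    show (b:ℕ) = n - 1 - (j:ℕ)
    have := j.isLt; have := b.isLt
    omega
  · intro h; exact absurd (Finset.mem_univ _) h

lemma JJ {n : ℕ} (hn : 1 ≤ n) : Jmat n * Jmat n = 1 := by
  ext i j
  rw [Jmul hn, Jmat, Matrix.one_apply]
  simp only [Matrix.of_apply]
  have hi := i.isLt; have hj := j.isLt
  by_cases h : i = j
  · have hv : (i:ℕ) = (j:ℕ) := by rw [h]
    rw [if_pos h, if_pos (show (n - 1 - (i:ℕ)) + (j:ℕ) = n - 1 by omega)]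
  · have hv : (i:ℕ) ≠ (j:ℕ) := fun hc => h (Fin.ext hc)
    rw [if_neg h, if_neg (show ¬ ((n - 1 - (i:ℕ)) + (j:ℕ) = n - 1) by omega)]

/-- Proposition 3.7(2), odd case: `𝒥·𝒰·𝒥` admits an LU-decomposition. -/
theorem prop_3_7_2 (n : ℕ) (hn : 1 ≤ n) :
    ∃ L U : Matrix (Fin n) (Fin n) ℝ,
      (∀ i j : Fin n, i < j → L i j = 0) ∧
      (∀ i j : Fin n, j < i → U i j = 0) ∧
      Jmat n * Umat n * Jmat n = L * U := by
  classical
  set G : Matrix (Fin n) (Fin n) ℝ :=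
    Matrix.of (fun i j : Fin n => (((2*n).choose ((i:ℕ)+(j:ℕ)+1) : ℕ) : ℝ)) with hGdef
  have hblocks : ∀ (k : ℕ) (h : k ≤ n),
      (G.submatrix (Fin.castLE h) (Fin.castLE h)).det ≠ 0 := by
    intro k h
    have heq : G.submatrix (Fin.castLE h) (Fin.castLE h)
        = Matrix.of (fun i j : Fin k => (((2*n).choose ((i:ℕ)+(j:ℕ)+1) : ℕ) : ℝ)) := rfl
    rw [heq]
    exact Gblock_det n k h hn
  obtain ⟨Lh, Uh, hLh, hUh, hfacG⟩ := lu_rec n G hblocks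
  have hdetG : G.det ≠ 0 := by
    have h := hblocks n le_rfl
    have hid : (Fin.castLE (le_refl n) : Fin n → Fin n) = id := funext fun x => Fin.ext rfl
    rw [hid, Matrix.submatrix_id_id] at h
    exact h
  have hdetLU : Lh.det * Uh.det ≠ 0 := by
    rw [← Matrix.det_mul, ← hfacG]; exact hdetG
  have hdetLh : IsUnit Lh.det := isUnit_iff_ne_zero.mpr (fun h => hdetLU (by rw [h, zero_mul]))
  have hdetUh : IsUnit Uh.det := isUnit_iff_ne_zero.mpr (fun h => hdetLU (by rw [h, mul_zero]))
  -- inverse triangularity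
  haveI hinvU : Invertible Uh := Uh.invertibleOfIsUnitDet hdetUh
  have hUhBT : Uh.BlockTriangular id := fun i j h => hUh i j h
  have hUinv : ∀ i j : Fin n, j < i → Uh⁻¹ i j = 0 := by
    intro i j h
    exact Matrix.blockTriangular_inv_of_blockTriangular hUhBT h
  haveI hinvLT : Invertible Lhᵀ := Lhᵀ.invertibleOfIsUnitDet (by rwa [Matrix.det_transpose])
  have hLhBT : Lhᵀ.BlockTriangular id := fun i j h => hLh j i h
  have hLinv : ∀ i j : Fin n, i < j → Lh⁻¹ i j = 0 := by
    intro i j h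
    have h1 : (Lhᵀ)⁻¹ j i = 0 := Matrix.blockTriangular_inv_of_blockTriangular hLhBT h
    rwa [← Matrix.transpose_nonsing_inv, Matrix.transpose_apply] at h1
  -- N = G * J
  have hNG : Nmat n = G * Jmat n := by
    ext i j
    rw [mulJ hn]
    rw [Nmat, hGdef]
    simp only [Matrix.of_apply]
    show ((2*n).choose (n + (i:ℕ) - (j:ℕ)) : ℝ)
        = ((2*n).choose ((i:ℕ) + (n - 1 - (j:ℕ)) + 1) : ℝ)
    have harg : n + (i:ℕ) - (j:ℕ) = (i:ℕ) + (n - 1 - (j:ℕ)) + 1 := by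
      have := i.isLt; have := j.isLt; omega
    rw [harg]
  have hNinv : (Nmat n)⁻¹ = Jmat n * (Uh⁻¹ * Lh⁻¹) := by
    rw [hNG, Matrix.mul_inv_rev, Matrix.inv_eq_right_inv (JJ hn)]
    congr 1
    rw [hfacG, Matrix.mul_inv_rev]
  have hJX : ∀ X : Matrix (Fin n) (Fin n) ℝ, Jmat n * (Jmat n * X) = X := by
    intro X
    rw [← Matrix.mul_assoc, JJ hn, Matrix.one_mul]
  -- final factors
  refine ⟨Dmat n * (Jmat n * Uh⁻¹ * Jmat n), Jmat n * (Lh⁻¹ * Dmat n) * Jmat n, ?_, ?_, ?_⟩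
  · -- lower triangularity
    apply lowmul
    · intro i j hij
      rw [Dmat]
      simp only [Matrix.of_apply]
      rw [if_neg (by exact fun hc => absurd hij (by have : (i:ℕ) < (j:ℕ) := hij; omega))]
    · intro i j hij
      rw [mulJ hn, Jmul hn]
      apply hUinv
      have hi := i.isLt; have hj := j.isLt
      have hij' : (i:ℕ) < (j:ℕ) := hij
      show (n - 1 - (j:ℕ)) < (n - 1 - (i:ℕ))
      omega
  · -- upper triangularity
    intro i j hji
    rw [mulJ hn, Jmul hn]
    have hi := i.isLt; have hj := j.isLt
    have hji' : (j:ℕ) < (i:ℕ) := hji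
    apply lowmul hLinv _ _ _ _
    · intro a b hab
      rw [Dmat]
      simp only [Matrix.of_apply]
      rw [if_neg (by have : (a:ℕ) < (b:ℕ) := hab; omega)]
    · show (n - 1 - (i:ℕ)) < (n - 1 - (j:ℕ))
      omega
  · -- the equation
    rw [Umat, hNinv]
    simp only [Matrix.mul_assoc]
    rw [hJX]
    rw [hJX (Lh⁻¹ * (Dmat n * Jmat n))]

end
end

section
/- (Corollary 3.8, odd case) Let n ≥ 1 and let 𝒰 = 𝒥·𝒟·𝒩⁻¹·𝒟 as below. For every n×n real matrix C there exist two lower-triangular n×n real matrices X and Y such that 𝒰·X − Yᵀ·𝒰 = C. -/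
open Matrix

noncomputable section

section Aux
open Finset Polynomial



/-- factorial product lemma -/
lemma fact_add_eq (a b : ℕ) : Nat.factorial (a + b) = Nat.factorial a * ∏ s ∈ range b, (a + 1 + s) := by
  induction b with
  | zero => simp
  | succ b ih =>
    rw [prod_range_succ, ← mul_assoc, ← ih, ← Nat.add_assoc]
    rw [Nat.factorial_succ]
    ring

/-- alternating sums of binomials times powers vanish -/
lemma apow : ∀ j m : ℕ, m < j →
    ∑ k ∈ range (j+1), (-1:ℝ)^k * (j.choose k) * (k:ℝ)^m = 0 := by
  intro j
  induction j with
  | zero => intro m hm; omega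
  | succ j ih =>
    intro m hm
    match m with
    | 0 =>
      have := Int.alternating_sum_range_choose_of_ne (n := j+1) (by omega)
      have h2 : ((∑ i ∈ range (j+2), (-1:ℤ)^i * ((j+1).choose i) : ℤ) : ℝ) = 0 := by
        rw [this]; simp
      push_cast at h2
      simpa using h2
    | m+1 =>
      have h0 : ∑ k ∈ range (j+2), (-1:ℝ)^k * ((j+1).choose k) * (k:ℝ)^(m+1)
          = ∑ k ∈ range (j+1), (-1:ℝ)^(k+1) * ((j+1).choose (k+1)) * ((k:ℝ)+1)^(m+1) := by
        rw [Finset.sum_range_succ' (fun k => (-1:ℝ)^k * ((j+1).choose k) * (k:ℝ)^(m+1)) (j+1)]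
        push_cast
        simp
      rw [h0]
      have key : ∀ k : ℕ, ((j+1).choose (k+1) : ℝ) * ((k:ℝ)+1) = (j+1) * (j.choose k) := by
        intro k
        have := Nat.add_one_mul_choose_eq j k
        have := congrArg (Nat.cast : ℕ → ℝ) this
        push_cast at this
        linarith
      have h1 : ∀ k ∈ range (j+1), (-1:ℝ)^(k+1) * ((j+1).choose (k+1)) * ((k:ℝ)+1)^(m+1)
          = -((j:ℝ)+1) * ((-1:ℝ)^k * (j.choose k) * ((k:ℝ)+1)^m) := by
        intro k _
        have hk := key k
        calc (-1:ℝ)^(k+1) * ((j+1).choose (k+1)) * ((k:ℝ)+1)^(m+1)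
            = -((-1:ℝ)^k * ((((j+1).choose (k+1)):ℝ) * ((k:ℝ)+1)) * ((k:ℝ)+1)^m) := by ring
          _ = -((-1:ℝ)^k * (((j:ℝ)+1) * ((j.choose k):ℝ)) * ((k:ℝ)+1)^m) := by rw [hk]
          _ = -((j:ℝ)+1) * ((-1:ℝ)^k * (j.choose k) * ((k:ℝ)+1)^m) := by ring
      rw [Finset.sum_congr rfl h1, ← Finset.mul_sum]
      have expand : ∀ k ∈ range (j+1), (-1:ℝ)^k * (j.choose k) * ((k:ℝ)+1)^m
          = ∑ r ∈ range (m+1), (m.choose r) * ((-1:ℝ)^k * (j.choose k) * (k:ℝ)^r) := by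
        intro k _
        rw [add_pow]
        rw [Finset.mul_sum]
        apply Finset.sum_congr rfl
        intro r _
        simp
        ring
      rw [Finset.sum_congr rfl expand, Finset.sum_comm]
      have inner : ∀ r ∈ range (m+1), ∑ k ∈ range (j+1), (m.choose r) * ((-1:ℝ)^k * (j.choose k) * (k:ℝ)^r) = 0 := by
        intro r hr
        rw [← Finset.mul_sum, ih r (by simp at hr; omega)]
        ring
      rw [Finset.sum_congr rfl inner]
      simp

open Finset Polynomial

lemma apoly (j : ℕ) (p : ℝ[X]) (hd : p.natDegree < j) :
    ∑ k ∈ range (j+1), (-1:ℝ)^k * (j.choose k) * p.eval (k:ℝ) = 0 := by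
  have expand : ∀ k ∈ range (j+1), (-1:ℝ)^k * (j.choose k) * p.eval (k:ℝ)
      = ∑ m ∈ range (p.natDegree + 1), p.coeff m * ((-1:ℝ)^k * (j.choose k) * (k:ℝ)^m) := by
    intro k _
    rw [eval_eq_sum_range, Finset.mul_sum]
    apply Finset.sum_congr rfl
    intro m _
    ring
  rw [Finset.sum_congr rfl expand, Finset.sum_comm]
  apply Finset.sum_eq_zero
  intro m hm
  rw [← Finset.mul_sum, apow j m (by simp at hm; omega), mul_zero]

lemma partfrac : ∀ j : ℕ, ∀ x : ℝ, 0 < x →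
    ∑ k ∈ range (j+1), (-1:ℝ)^k * (j.choose k) / (x + k)
      = (j.factorial : ℝ) / ∏ t ∈ range (j+1), (x + t) := by
  intro j
  induction j with
  | zero => intro x hx; simp
  | succ j ih =>
    intro x hx
    have hS : ∀ y : ℝ, 0 < y → ∑ k ∈ range (j+2), (-1:ℝ)^k * (j.choose k) / (y + k)
        = ∑ k ∈ range (j+1), (-1:ℝ)^k * (j.choose k) / (y + k) := by
      intro y hy
      rw [Finset.sum_range_succ]
      simp [Nat.choose_eq_zero_of_lt (by omega : j < j+1)]
    have step : ∑ k ∈ range (j+2), (-1:ℝ)^k * ((j+1).choose k) / (x + k)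
        = (∑ k ∈ range (j+1), (-1:ℝ)^k * (j.choose k) / (x + k))
          - ∑ k ∈ range (j+1), (-1:ℝ)^k * (j.choose k) / ((x+1) + k) := by
      rw [Finset.sum_range_succ' (fun k => (-1:ℝ)^k * ((j+1).choose k) / (x + k)) (j+1)]
      have hsplit : ∀ k ∈ range (j+1),
          (-1:ℝ)^(k+1) * ((j+1).choose (k+1)) / (x + (k+1:ℕ))
          = -((-1:ℝ)^k * (j.choose k) / ((x+1) + k))
            - ((-1:ℝ)^k * (j.choose (k+1)) / (x + (k+1:ℕ))) := by
        intro k _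
        have hc : ((j+1).choose (k+1) : ℝ) = (j.choose k : ℝ) + (j.choose (k+1) : ℝ) := by
          rw [Nat.choose_succ_succ]
          push_cast; ring
        rw [hc]
        push_cast
        have h1 : x + ((k:ℝ)+1) ≠ 0 := by positivity
        field_simp
        ring
      rw [Finset.sum_congr rfl hsplit]
      rw [Finset.sum_sub_distrib]
      have hB : ∑ k ∈ range (j+1), ((-1:ℝ)^k * (j.choose (k+1)) / (x + (k+1:ℕ)))
          = -(∑ k ∈ range (j+2), (-1:ℝ)^k * (j.choose k) / (x + k)) + 1/x := by
        rw [Finset.sum_range_succ' (fun k => (-1:ℝ)^k * (j.choose k) / (x + k)) (j+1)]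
        push_cast
        simp only [pow_succ]
        have : ∀ k ∈ range (j+1), (-1:ℝ)^k * (-1) * (j.choose (k+1)) / (x + ((k:ℝ)+1))
            = -((-1:ℝ)^k * (j.choose (k+1)) / (x + ((k:ℝ)+1))) := by
          intro k _; ring
        rw [Finset.sum_congr rfl this]
        simp [Finset.sum_neg_distrib]
      push_cast at hB ⊢
      rw [hB]
      rw [hS x hx]
      simp only [Finset.sum_neg_distrib, Nat.choose_zero_right, Nat.cast_one, add_zero, one_mul,
        pow_zero, Nat.cast_zero]
      ring
    rw [step, ih x hx, ih (x+1) (by linarith)]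
    have hP1 : ∏ t ∈ range (j+2), (x + t) = (∏ t ∈ range (j+1), (x + t)) * (x + (j+1)) := by
      rw [Finset.prod_range_succ]; push_cast; ring
    have hP2 : ∏ t ∈ range (j+2), (x + t) = x * ∏ t ∈ range (j+1), ((x+1) + t) := by
      rw [Finset.prod_range_succ' (fun t => x + (t:ℕ)) (j+1)]
      have h1 : ∀ t ∈ range (j+1), x + ((t+1 : ℕ):ℝ) = (x+1) + t := by
        intro t _; push_cast; ring
      rw [Finset.prod_congr rfl h1]
      push_cast
      ring
    have p0 : (0:ℝ) < ∏ t ∈ range (j+1), (x + t) := by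
      apply Finset.prod_pos; intro t _; positivity
    have p1 : (0:ℝ) < ∏ t ∈ range (j+1), ((x+1) + t) := by
      apply Finset.prod_pos; intro t _; positivity
    have p2 : (0:ℝ) < ∏ t ∈ range (j+2), (x + t) := by
      apply Finset.prod_pos; intro t _; positivity
    have hfac : (((j+1).factorial : ℕ) : ℝ) = ((j:ℝ)+1) * (j.factorial : ℝ) := by
      rw [Nat.factorial_succ]; push_cast; ring
    rw [hfac]
    rw [div_sub_div _ _ (ne_of_gt p0) (ne_of_gt p1)]
    rw [div_eq_div_iff (by positivity) (ne_of_gt p2)]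
    push_cast at hP1 hP2
    linear_combination ((j.factorial:ℝ) * (∏ t ∈ range (j+1), ((x+1) + (t:ℝ)))) * hP1
      - ((j.factorial:ℝ) * (∏ t ∈ range (j+1), (x + (t:ℝ)))) * hP2

open Finset Polynomial

lemma fact_sub_eq : ∀ (b a : ℕ), b ≤ a →
    Nat.factorial a = Nat.factorial (a - b) * ∏ t ∈ range b, (a - t) := by
  intro b
  induction b with
  | zero => intro a _; simp
  | succ b ih =>
    intro a hba
    rw [prod_range_succ, ← mul_assoc, mul_comm (Nat.factorial (a - (b+1))) _]
    have h1 : a - b = (a - (b+1)) + 1 := by omega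
    have := ih a (by omega)
    rw [this]
    rw [h1, Nat.factorial_succ]
    ring

/-- ℕ-level key identity for off-diagonal entries -/
lemma key_offdiag (n i j k : ℕ) (hn : 1 ≤ n) (hij : i < j) (hj : j ≤ n - 1) (hk : k ≤ j) :
    Nat.factorial (j+k) * Nat.factorial (2*n-1-k) * ((2*n).choose (i+k+1))
      = Nat.factorial (2*n) *
        ((∏ t ∈ range (j-i-1), (j+k-t)) * ∏ t ∈ range i, (2*n-1-k-t)) := by
  have h1 : Nat.factorial (j+k) = Nat.factorial (i+1+k) * ∏ t ∈ range (j-i-1), (j+k-t) := by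
    have := fact_sub_eq (j-i-1) (j+k) (by omega)
    rwa [show j+k-(j-i-1) = i+1+k by omega] at this
  have h2 : Nat.factorial (2*n-1-k) = Nat.factorial (2*n-1-i-k) * ∏ t ∈ range i, (2*n-1-k-t) := by
    have := fact_sub_eq i (2*n-1-k) (by omega)
    rwa [show 2*n-1-k-i = 2*n-1-i-k by omega] at this
  have h3 : (2*n).choose (i+k+1) * Nat.factorial (i+k+1) * Nat.factorial (2*n-(i+k+1))
      = Nat.factorial (2*n) := Nat.choose_mul_factorial_mul_factorial (by omega : i+k+1 ≤ 2*n)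
  rw [show 2*n-(i+k+1) = 2*n-1-i-k by omega] at h3
  rw [h1, h2, ← h3]
  rw [show i+1+k = i+k+1 by omega]
  ring

/-- ℕ-level key identity for diagonal entries -/
lemma key_diag (n j k : ℕ) (hn : 1 ≤ n) (hj : j ≤ n - 1) (hk : k ≤ j) :
    Nat.factorial (j+k) * Nat.factorial (2*n-1-k) * ((2*n).choose (j+k+1)) * (j+1+k)
      = Nat.factorial (2*n) * ∏ t ∈ range j, (2*n-1-k-t) := by
  have h1 : Nat.factorial (j+k) * (j+1+k) = Nat.factorial (j+1+k) := by
    rw [show j+1+k = (j+k)+1 by omega, Nat.factorial_succ]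
    ring
  have h2 : Nat.factorial (2*n-1-k) = Nat.factorial (2*n-1-j-k) * ∏ t ∈ range j, (2*n-1-k-t) := by
    have := fact_sub_eq j (2*n-1-k) (by omega)
    rwa [show 2*n-1-k-j = 2*n-1-j-k by omega] at this
  have h3 : (2*n).choose (j+k+1) * Nat.factorial (j+k+1) * Nat.factorial (2*n-(j+k+1))
      = Nat.factorial (2*n) := Nat.choose_mul_factorial_mul_factorial (by omega : j+k+1 ≤ 2*n)
  rw [show 2*n-(j+k+1) = 2*n-1-j-k by omega] at h3
  calc Nat.factorial (j+k) * Nat.factorial (2*n-1-k) * ((2*n).choose (j+k+1)) * (j+1+k)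
      = (Nat.factorial (j+k) * (j+1+k)) * Nat.factorial (2*n-1-k) * ((2*n).choose (j+k+1)) := by ring
    _ = Nat.factorial (j+1+k) * (Nat.factorial (2*n-1-j-k) * ∏ t ∈ range j, (2*n-1-k-t))
          * ((2*n).choose (j+k+1)) := by rw [h1, h2]
    _ = ((2*n).choose (j+k+1) * Nat.factorial (j+k+1) * Nat.factorial (2*n-1-j-k))
          * ∏ t ∈ range j, (2*n-1-k-t) := by rw [show j+1+k = j+k+1 by omega]; ring
    _ = Nat.factorial (2*n) * ∏ t ∈ range j, (2*n-1-k-t) := by rw [h3]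

open Finset Polynomial

lemma entry_zero (n i j : ℕ) (hn : 1 ≤ n) (hij : i < j) (hj : j ≤ n - 1) :
    ∑ k ∈ range (j+1), (-1:ℝ)^k * (j.choose k) * (Nat.factorial (j+k)) *
      (Nat.factorial (2*n-1-k)) * ((2*n).choose (i+k+1)) = 0 := by
  set p : ℝ[X] := (∏ t ∈ range (j-i-1), (X + C ((j-t : ℕ) : ℝ))) *
      ∏ t ∈ range i, (C ((2*n-1-t : ℕ) : ℝ) - X) with hp
  have hdeg : p.natDegree < j := by
    have h1 : (∏ t ∈ range (j-i-1), (X + C ((j-t : ℕ) : ℝ))).natDegree ≤ j-i-1 := by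
      apply le_trans (natDegree_prod_le _ _)
      apply le_trans (Finset.sum_le_card_nsmul _ _ 1 ?_)
      · simp [Finset.card_range]
      · intro t _
        exact le_trans (natDegree_add_le _ _) (by simp)
    have h2 : (∏ t ∈ range i, (C ((2*n-1-t : ℕ) : ℝ) - X)).natDegree ≤ i := by
      apply le_trans (natDegree_prod_le _ _)
      apply le_trans (Finset.sum_le_card_nsmul _ _ 1 ?_)
      · simp [Finset.card_range]
      · intro t _
        exact le_trans (natDegree_sub_le _ _) (by simp)
    calc p.natDegree ≤ _ + _ := natDegree_mul_le
      _ < j := by omega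
  have heval : ∀ k ∈ range (j+1), (-1:ℝ)^k * (j.choose k) * (Nat.factorial (j+k)) *
      (Nat.factorial (2*n-1-k)) * ((2*n).choose (i+k+1))
      = ((2*n).factorial : ℝ) * ((-1:ℝ)^k * (j.choose k) * p.eval (k:ℝ)) := by
    intro k hk
    simp only [Finset.mem_range] at hk
    have hk' : k ≤ j := by omega
    have hkey := key_offdiag n i j k hn hij hj hk'
    have hcast : ((Nat.factorial (j+k) : ℕ) : ℝ) * (Nat.factorial (2*n-1-k) : ℝ) * ((2*n).choose (i+k+1) : ℝ)
        = ((Nat.factorial (2*n) : ℕ) : ℝ) * (((∏ t ∈ range (j-i-1), (j+k-t) : ℕ) : ℝ) *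
            ((∏ t ∈ range i, (2*n-1-k-t) : ℕ) : ℝ)) := by
      exact_mod_cast congrArg (Nat.cast : ℕ → ℝ) hkey
    have hev : p.eval (k:ℝ) = ((∏ t ∈ range (j-i-1), (j+k-t) : ℕ) : ℝ) *
        ((∏ t ∈ range i, (2*n-1-k-t) : ℕ) : ℝ) := by
      rw [hp, eval_mul, eval_prod, eval_prod]
      rw [Nat.cast_prod, Nat.cast_prod]
      congr 1
      · apply Finset.prod_congr rfl
        intro t ht
        simp only [Finset.mem_range] at ht
        simp only [eval_add, eval_X, eval_C]
        rw [← Nat.cast_add, show k + (j - t) = j+k-t by omega]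
      · apply Finset.prod_congr rfl
        intro t ht
        simp only [Finset.mem_range] at ht
        simp only [eval_sub, eval_X, eval_C]
        rw [← Nat.cast_sub (by omega : k ≤ 2*n-1-t), show 2*n-1-t-k = 2*n-1-k-t by omega]
    rw [hev]
    linear_combination ((-1:ℝ)^k * (j.choose k)) * hcast
  rw [Finset.sum_congr rfl heval, ← Finset.mul_sum, apoly j p hdeg, mul_zero]

lemma entry_diag (n j : ℕ) (hn : 1 ≤ n) (hj : j ≤ n - 1) :
    0 < ∑ k ∈ range (j+1), (-1:ℝ)^k * (j.choose k) * (Nat.factorial (j+k)) *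
      (Nat.factorial (2*n-1-k)) * ((2*n).choose (j+k+1)) := by
  set g : ℝ[X] := ∏ t ∈ range j, (C ((2*n-1-t : ℕ) : ℝ) - X) with hg
  set a : ℝ := -((j:ℝ)+1) with ha
  set G0 : ℝ := g.eval a with hG0
  obtain ⟨q, hq⟩ := Polynomial.X_sub_C_dvd_sub_C_eval (a := a) (p := g)
  have hgdeg : g.natDegree ≤ j := by
    apply le_trans (natDegree_prod_le _ _)
    apply le_trans (Finset.sum_le_card_nsmul _ _ 1 ?_)
    · simp [Finset.card_range]
    · intro t _
      exact le_trans (natDegree_sub_le _ _) (by simp)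
  have hqsum : ∑ k ∈ range (j+1), (-1:ℝ)^k * (j.choose k) * q.eval (k:ℝ) = 0 := by
    rcases eq_or_ne q 0 with h | h
    · simp [h]
    · apply apoly
      have hmul := Polynomial.Monic.natDegree_mul' (monic_X_sub_C a) h
      rw [← hq] at hmul
      rw [natDegree_X_sub_C] at hmul
      have hle : (g - C G0).natDegree ≤ j := le_trans (natDegree_sub_le _ _) (by
        simp only [natDegree_C, max_eq_left (Nat.zero_le _)]
        exact hgdeg)
      rw [hmul] at hle
      omega
  have hqev : ∀ k : ℕ, g.eval (k:ℝ) = ((k:ℝ) + ((j:ℝ)+1)) * q.eval (k:ℝ) + G0 := by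
    intro k
    have := congrArg (Polynomial.eval (k:ℝ)) hq
    simp only [eval_sub, eval_mul, eval_X, eval_C, ha] at this
    linarith
  have hterm : ∀ k ∈ range (j+1), (-1:ℝ)^k * (j.choose k) * (Nat.factorial (j+k)) *
      (Nat.factorial (2*n-1-k)) * ((2*n).choose (j+k+1))
      = ((2*n).factorial : ℝ) * ((-1:ℝ)^k * (j.choose k) * q.eval (k:ℝ))
        + (((2*n).factorial : ℝ) * G0) * ((-1:ℝ)^k * (j.choose k) / (((j:ℝ)+1) + k)) := by
    intro k hk
    simp only [Finset.mem_range] at hk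
    have hk' : k ≤ j := by omega
    have hkey := key_diag n j k hn hj hk'
    have hcast : ((Nat.factorial (j+k) : ℕ) : ℝ) * (Nat.factorial (2*n-1-k) : ℝ) *
        ((2*n).choose (j+k+1) : ℝ) * (((j:ℕ)+1+k : ℕ) : ℝ)
        = ((Nat.factorial (2*n) : ℕ) : ℝ) * ((∏ t ∈ range j, (2*n-1-k-t) : ℕ) : ℝ) := by
      exact_mod_cast congrArg (Nat.cast : ℕ → ℝ) hkey
    have hev : g.eval (k:ℝ) = ((∏ t ∈ range j, (2*n-1-k-t) : ℕ) : ℝ) := by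
      rw [hg, eval_prod, Nat.cast_prod]
      apply Finset.prod_congr rfl
      intro t ht
      simp only [Finset.mem_range] at ht
      simp only [eval_sub, eval_X, eval_C]
      rw [← Nat.cast_sub (by omega : k ≤ 2*n-1-t), show 2*n-1-t-k = 2*n-1-k-t by omega]
    rw [← hev] at hcast
    rw [hqev k] at hcast
    have hne : ((j:ℝ)+1) + (k:ℝ) ≠ 0 := by positivity
    push_cast at hcast
    field_simp
    linear_combination ((j.choose k : ℝ)) * hcast
  rw [Finset.sum_congr rfl hterm, Finset.sum_add_distrib, ← Finset.mul_sum, ← Finset.mul_sum,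
    hqsum, mul_zero, zero_add]
  rw [partfrac j ((j:ℝ)+1) (by positivity)]
  have hG0pos : 0 < G0 := by
    rw [hG0, hg, eval_prod]
    apply Finset.prod_pos
    intro t ht
    simp only [eval_sub, eval_X, eval_C, ha]
    have : (0:ℝ) ≤ ((2*n-1-t : ℕ) : ℝ) := Nat.cast_nonneg _
    linarith
  have hppos : (0:ℝ) < ∏ t ∈ range (j+1), (((j:ℝ)+1) + t) := by
    apply Finset.prod_pos
    intro t _
    positivity
  have hfpos : (0:ℝ) < (j.factorial : ℝ) := by exact_mod_cast j.factorial_pos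
  have h2npos : (0:ℝ) < ((2*n).factorial : ℝ) := by exact_mod_cast (2*n).factorial_pos
  positivity

open Matrix

namespace Cor38
variable (n : ℕ)

def Gm : Matrix (Fin n) (Fin n) ℝ :=
  Matrix.of fun i k => ((2*n).choose ((i:ℕ)+(k:ℕ)+1) : ℝ)

def Vm : Matrix (Fin n) (Fin n) ℝ :=
  Matrix.of fun k j => if (k:ℕ) ≤ (j:ℕ) then
    (-1:ℝ)^(k:ℕ) * (((j:ℕ).choose (k:ℕ)) : ℝ) * (Nat.factorial ((j:ℕ)+(k:ℕ)) : ℝ) *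
      (Nat.factorial (2*n-1-(k:ℕ)) : ℝ) else 0

def Pm : Matrix (Fin n) (Fin n) ℝ := Gm n * Vm n

variable {n}

lemma Pm_apply (hn : 1 ≤ n) (i j : Fin n) : Pm n i j =
    ∑ k ∈ range ((j:ℕ)+1), (-1:ℝ)^k * (((j:ℕ).choose k) : ℝ) * (Nat.factorial ((j:ℕ)+k)) *
      (Nat.factorial (2*n-1-k)) * ((2*n).choose ((i:ℕ)+k+1)) := by
  classical
  set f : ℕ → ℝ := fun k => (if k ≤ (j:ℕ) then
    (-1:ℝ)^k * (((j:ℕ).choose k) : ℝ) * (Nat.factorial ((j:ℕ)+k) : ℝ) *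
      (Nat.factorial (2*n-1-k) : ℝ) else 0) * ((2*n).choose ((i:ℕ)+k+1) : ℝ) with hf
  have h1 : Pm n i j = ∑ k : Fin n, f (k:ℕ) := by
    rw [Pm, Matrix.mul_apply]
    apply Finset.sum_congr rfl
    intro k _
    rw [hf]
    simp only [Gm, Vm, Matrix.of_apply]
    split <;> ring
  rw [h1]
  have h2 : ∑ k : Fin n, f (k:ℕ) = ∑ k ∈ range n, f k := Fin.sum_univ_eq_sum_range f n
  rw [h2]
  rw [← Finset.sum_subset (Finset.range_subset_range.mpr (by have := j.isLt; omega : (j:ℕ)+1 ≤ n))]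
  · apply Finset.sum_congr rfl
    intro k hk
    simp only [Finset.mem_range] at hk
    have hkj : k ≤ (j:ℕ) := by omega
    simp only [hf, if_pos hkj]
  · intro k _ hk
    simp only [Finset.mem_range] at hk
    have hkj : ¬ k ≤ (j:ℕ) := by omega
    simp only [hf, if_neg hkj]
    ring

lemma Pm_lower (hn : 1 ≤ n) (i j : Fin n) (hij : i < j) : Pm n i j = 0 := by
  rw [Pm_apply hn]
  exact entry_zero n i j hn (by exact_mod_cast hij) (by have := j.isLt; omega)

lemma Pm_diag_pos (hn : 1 ≤ n) (j : Fin n) : 0 < Pm n j j := by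
  rw [Pm_apply hn]
  exact entry_diag n j hn (by have := j.isLt; omega)

lemma Vm_upper (i j : Fin n) (hij : j < i) : Vm n i j = 0 := by
  rw [Vm, Matrix.of_apply, if_neg (by exact_mod_cast not_le.mpr hij)]

lemma Vm_diag (j : Fin n) : Vm n j j =
    (-1:ℝ)^(j:ℕ) * (Nat.factorial ((j:ℕ)+(j:ℕ)) : ℝ) * (Nat.factorial (2*n-1-(j:ℕ)) : ℝ) := by
  rw [Vm, Matrix.of_apply, if_pos le_rfl, Nat.choose_self]
  push_cast
  ring

lemma Vm_det_ne : (Vm n).det ≠ 0 := by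
  rw [Matrix.det_of_upperTriangular (fun i j hij => Vm_upper i j hij)]
  apply Finset.prod_ne_zero_iff.mpr
  intro j _
  rw [Vm_diag]
  have h1 : (0:ℝ) < (Nat.factorial ((j:ℕ)+(j:ℕ)) : ℝ) := by exact_mod_cast Nat.factorial_pos _
  have h2 : (0:ℝ) < (Nat.factorial (2*n-1-(j:ℕ)) : ℝ) := by exact_mod_cast Nat.factorial_pos _
  have h3 : (-1:ℝ)^(j:ℕ) ≠ 0 := by
    apply pow_ne_zero; norm_num
  positivity

lemma Pm_det_ne (hn : 1 ≤ n) : (Pm n).det ≠ 0 := by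
  rw [Matrix.det_of_lowerTriangular (Pm n) (fun i j hij => Pm_lower hn i j hij)]
  apply Finset.prod_ne_zero_iff.mpr
  intro j _
  exact ne_of_gt (Pm_diag_pos hn j)

lemma Jmul (hn : 1 ≤ n) (M : Matrix (Fin n) (Fin n) ℝ) (i : Fin n) (j : Fin n) :
    (Jmat n * M) i j = M ⟨n-1-(i:ℕ), by have := i.isLt; omega⟩ j := by
  rw [Matrix.mul_apply]
  rw [Finset.sum_eq_single (⟨n-1-(i:ℕ), by have := i.isLt; omega⟩ : Fin n)]
  · rw [Jmat, Matrix.of_apply, if_pos (by have := i.isLt; simp; omega), one_mul]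
  · intro k _ hk
    rw [Jmat, Matrix.of_apply, if_neg, zero_mul]
    intro hcon
    apply hk
    apply Fin.ext
    have := i.isLt; have := k.isLt
    simp
    omega
  · intro h
    exact absurd (Finset.mem_univ _) h

lemma mulJ (hn : 1 ≤ n) (M : Matrix (Fin n) (Fin n) ℝ) (i : Fin n) (j : Fin n) :
    (M * Jmat n) i j = M i ⟨n-1-(j:ℕ), by have := j.isLt; omega⟩ := by
  rw [Matrix.mul_apply]
  rw [Finset.sum_eq_single (⟨n-1-(j:ℕ), by have := j.isLt; omega⟩ : Fin n)]
  · rw [Jmat, Matrix.of_apply, if_pos (by have := j.isLt; simp; omega), mul_one]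
  · intro k _ hk
    rw [Jmat, Matrix.of_apply, if_neg, mul_zero]
    intro hcon
    apply hk
    apply Fin.ext
    have := j.isLt; have := k.isLt
    simp
    omega
  · intro h
    exact absurd (Finset.mem_univ _) h

lemma JJ (hn : 1 ≤ n) : Jmat n * Jmat n = (1 : Matrix (Fin n) (Fin n) ℝ) := by
  ext i j
  rw [Jmul hn]
  rw [Jmat, Matrix.of_apply, Matrix.one_apply]
  have hi := i.isLt; have hj := j.isLt
  by_cases h : i = j
  · rw [if_pos (by subst h; simp; omega), if_pos h]
  · rw [if_neg, if_neg h]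
    intro hcon
    apply h
    apply Fin.ext
    simp at hcon
    omega

lemma JDJ (hn : 1 ≤ n) : Jmat n * Dmat n * Jmat n = (Dmat n)ᵀ := by
  ext i j
  rw [mulJ hn, Jmul hn]
  rw [Dmat, Matrix.transpose_apply, Matrix.of_apply, Matrix.of_apply]
  have hi := i.isLt; have hj := j.isLt
  by_cases h : (i:ℕ) ≤ (j:ℕ)
  · rw [if_pos (by simp; omega), if_pos h]
    norm_cast
    congr 1
    simp
    omega
  · rw [if_neg (by simp; omega), if_neg h]

lemma NG (hn : 1 ≤ n) : Nmat n = Gm n * Jmat n := by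
  ext i j
  rw [mulJ hn]
  rw [Nmat, Gm, Matrix.of_apply, Matrix.of_apply]
  have hi := i.isLt; have hj := j.isLt
  norm_cast
  congr 1
  simp
  omega

lemma Ninv (hn : 1 ≤ n) : (Nmat n)⁻¹ = Jmat n * Vm n * (Pm n)⁻¹ := by
  apply Matrix.inv_eq_right_inv
  rw [NG hn]
  have : Gm n * Jmat n * (Jmat n * Vm n * (Pm n)⁻¹)
      = Gm n * (Jmat n * Jmat n) * Vm n * (Pm n)⁻¹ := by
    simp only [Matrix.mul_assoc]
  rw [this, JJ hn, Matrix.mul_one, ← Pm]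
  exact Matrix.mul_nonsing_inv _ (isUnit_iff_ne_zero.mpr (Pm_det_ne hn))

lemma Ufact (hn : 1 ≤ n) :
    Umat n = ((Dmat n)ᵀ * Vm n) * ((Pm n)⁻¹ * Dmat n) := by
  rw [Umat, Ninv hn]
  have : Jmat n * Dmat n * (Jmat n * Vm n * (Pm n)⁻¹) * Dmat n
      = (Jmat n * Dmat n * Jmat n) * Vm n * ((Pm n)⁻¹ * Dmat n) := by
    simp only [Matrix.mul_assoc]
  rw [this, JDJ hn, Matrix.mul_assoc]

end Cor38

end Aux

open Cor38

/-- Corollary 3.8, odd case: for every `n × n` real matrix `C` there exist two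
lower-triangular matrices `X, Y` with `𝒰·X − Yᵀ·𝒰 = C`. -/
theorem cor_3_8 (n : ℕ) (hn : 1 ≤ n) (C : Matrix (Fin n) (Fin n) ℝ) :
    ∃ X Y : Matrix (Fin n) (Fin n) ℝ,
      (∀ i j : Fin n, i < j → X i j = 0) ∧
      (∀ i j : Fin n, i < j → Y i j = 0) ∧
      Umat n * X - Yᵀ * Umat n = C := by
  classical
  set R := (Dmat n)ᵀ * Vm n with hRdef
  set L := (Pm n)⁻¹ * Dmat n with hLdef
  have hDlow : (Dmat n).BlockTriangular OrderDual.toDual := by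
    intro i j hij
    have hij' : i < j := hij
    rw [Dmat, Matrix.of_apply, if_neg (not_le.mpr (by exact_mod_cast hij'))]
  have hDTup : ((Dmat n)ᵀ).BlockTriangular id := by
    intro i j hij
    have hij' : j < i := hij
    rw [Matrix.transpose_apply, Dmat, Matrix.of_apply,
      if_neg (not_le.mpr (by exact_mod_cast hij'))]
  have hDdet : (Dmat n).det ≠ 0 := by
    rw [Matrix.det_of_lowerTriangular (Dmat n) hDlow]
    apply Finset.prod_ne_zero_iff.mpr
    intro j _
    rw [Dmat, Matrix.of_apply, if_pos le_rfl, Nat.sub_self, Nat.choose_zero_right]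
    norm_num
  have hPlowBT : (Pm n).BlockTriangular OrderDual.toDual := by
    intro i j hij
    exact Pm_lower hn i j hij
  have hVupBT : (Vm n).BlockTriangular id := fun i j hij => Vm_upper i j hij
  have hPunit : IsUnit (Pm n).det := isUnit_iff_ne_zero.mpr (Pm_det_ne hn)
  have hVunit : IsUnit (Vm n).det := isUnit_iff_ne_zero.mpr Vm_det_ne
  letI : Invertible (Pm n) := (Pm n).invertibleOfIsUnitDet hPunit
  have hPinvLow : ((Pm n)⁻¹).BlockTriangular OrderDual.toDual :=
    Matrix.blockTriangular_inv_of_blockTriangular hPlowBT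
  have hLlow : L.BlockTriangular OrderDual.toDual := hPinvLow.mul hDlow
  have hRup : R.BlockTriangular id := hDTup.mul hVupBT
  have hLdet : L.det ≠ 0 := by
    rw [hLdef, Matrix.det_mul, Matrix.det_nonsing_inv]
    simp only [Ring.inverse_eq_inv']
    exact mul_ne_zero (inv_ne_zero (Pm_det_ne hn)) hDdet
  have hRdet : R.det ≠ 0 := by
    rw [hRdef, Matrix.det_mul, Matrix.det_transpose]
    exact mul_ne_zero hDdet Vm_det_ne
  have hLunit : IsUnit L.det := isUnit_iff_ne_zero.mpr hLdet
  have hRunit : IsUnit R.det := isUnit_iff_ne_zero.mpr hRdet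
  letI : Invertible L := L.invertibleOfIsUnitDet hLunit
  letI : Invertible R := R.invertibleOfIsUnitDet hRunit
  have hLinvLow : (L⁻¹).BlockTriangular OrderDual.toDual :=
    Matrix.blockTriangular_inv_of_blockTriangular hLlow
  have hRinvUp : (R⁻¹).BlockTriangular id :=
    Matrix.blockTriangular_inv_of_blockTriangular hRup
  have hU : Umat n = R * L := Ufact hn
  set C2 : Matrix (Fin n) (Fin n) ℝ := R⁻¹ * C * L⁻¹ with hC2
  set X2 : Matrix (Fin n) (Fin n) ℝ :=
    Matrix.of (fun i j => if (j:ℕ) ≤ (i:ℕ) then C2 i j else 0) with hX2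
  set W2 : Matrix (Fin n) (Fin n) ℝ := X2 - C2 with hW2
  have hX2low : X2.BlockTriangular OrderDual.toDual := by
    intro i j hij
    have hij' : i < j := hij
    rw [hX2, Matrix.of_apply, if_neg (not_le.mpr (by exact_mod_cast hij'))]
  have hW2up : W2.BlockTriangular id := by
    intro i j hij
    have hij' : j < i := hij
    rw [hW2, Matrix.sub_apply, hX2, Matrix.of_apply,
      if_pos (le_of_lt (by exact_mod_cast hij'))]
    ring
  refine ⟨L⁻¹ * X2 * L, (R * W2 * R⁻¹)ᵀ, ?_, ?_, ?_⟩
  · intro i j hij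
    exact ((hLinvLow.mul hX2low).mul hLlow) (show OrderDual.toDual j < OrderDual.toDual i from hij)
  · intro i j hij
    rw [Matrix.transpose_apply]
    exact ((hRup.mul hW2up).mul hRinvUp) (show id i < id j from hij)
  · rw [Matrix.transpose_transpose]
    have e1 : Umat n * (L⁻¹ * X2 * L) = R * (X2 * L) := by
      rw [hU]
      simp only [Matrix.mul_assoc]
      rw [Matrix.mul_nonsing_inv_cancel_left _ _ hLunit]
    have e2 : (R * W2 * R⁻¹) * Umat n = R * (W2 * L) := by
      rw [hU]
      simp only [Matrix.mul_assoc]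
      rw [Matrix.nonsing_inv_mul_cancel_left _ _ hRunit]
    rw [e1, e2, ← Matrix.mul_sub, ← Matrix.sub_mul]
    have : X2 - W2 = C2 := by rw [hW2, sub_sub_cancel]
    rw [this, hC2]
    simp only [Matrix.mul_assoc]
    rw [Matrix.mul_nonsing_inv_cancel_left _ _ hRunit, Matrix.nonsing_inv_mul _ hLunit,
      Matrix.mul_one]

end
end
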